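/- Gentle Operator Lemma for Ensembles: let {p(x), ρ_x}_{x ∈ 𝒳} be a finite ensemble of d × d density matrices (p a probability distribution on the finite set 𝒳, each ρ_x positive semidefinite with unit trace) with average state ρ̄ = Σ_x p(x) ρ_x, let Λ be a Hermitian d × d matrix with 0 ≤ Λ ≤ I, and let ε ≥ 0 satisfy Tr{Λρ̄} ≥ 1 − ε. Then Σ_x p(x) ‖√Λ ρ_x √Λ − ρ_x‖₁ ≤ 2√ε, where √Λ is the positive semidefinite square root of Λ. -/

import Mathlib

open scoped ComplexOrder

noncomputable section

/-- The positive semidefinite square root of a positive semidefinite matrix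
(`Matrix.PosSemidef.sqrt` of the older Mathlib, removed since; restated with its old definition). -/
def Matrix.PosSemidef.sqrt {n : Type*} [Fintype n] [DecidableEq n] {𝕜 : Type*} [RCLike 𝕜]
    {A : Matrix n n 𝕜} (hA : A.PosSemidef) : Matrix n n 𝕜 :=
  hA.1.eigenvectorUnitary.1 * Matrix.diagonal ((↑) ∘ (√·) ∘ hA.1.eigenvalues) *
  (star hA.1.eigenvectorUnitary : Matrix n n 𝕜)

/-- The trace norm `‖A‖₁ = Tr √(AᴴA)` of a complex square matrix. -/
def traceNorm {d : ℕ} (A : Matrix (Fin d) (Fin d) ℂ) : ℝ :=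
  ((Matrix.posSemidef_conjTranspose_mul_self A).sqrt.trace).re

/-!
For a single state `ρ` put `s = √Λ` and `M = sρs - ρ = sρ(s - 1) + (s - 1)ρ`. Since `M` is
Hermitian, `|M| = CM` for the unitary `C = sign M`, so `‖M‖₁ = Re Tr(CM)`. Cauchy–Schwarz for
the semi-inner product `⟪X, Y⟫ = Tr(YρXᴴ)` bounds both terms by `√Tr ρ · ‖s - 1‖_ρ`, and
`‖s - 1‖_ρ ≤ √Tr((1 - Λ)ρ)` because `(1 - √Λ)² ≤ 1 - Λ` when `0 ≤ Λ ≤ 1`. Averaging over the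
ensemble, concavity of the square root gives `Σ p(x) √Tr((1 - Λ)ρ_x) ≤ √Tr((1 - Λ)ρ̄) ≤ √ε`.
-/

open scoped MatrixOrder

section CStarAlgebra

variable {A : Type*} [Ring A] [StarRing A] [TopologicalSpace A] [Algebra ℝ A]
  [ContinuousFunctionalCalculus ℝ A IsSelfAdjoint] [PartialOrder A] [StarOrderedRing A]
  [NonnegSpectrumClass ℝ A] [IsTopologicalRing A] [T2Space A]

lemma CFC.sq_one_sub_sqrt_le_one_sub {a : A} (ha₀ : 0 ≤ a) (ha₁ : a ≤ 1) :
    (1 - CFC.sqrt a) ^ 2 ≤ 1 - a := by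
  have hsq : (1 - CFC.sqrt a) ^ 2 = cfc (fun x : ℝ ↦ (1 - √x) ^ 2) a := by
    rw [cfc_pow .., cfc_sub .., cfc_const_one .., CFC.sqrt_eq_real_sqrt a, cfcₙ_eq_cfc]
  have hsub : 1 - a = cfc (fun x : ℝ ↦ 1 - x) a := by
    rw [cfc_sub .., cfc_const_one .., cfc_id' ..]
  rw [hsq, hsub, cfc_le_iff ..]
  intro x hx
  have h₀ : 0 ≤ x := spectrum_nonneg_of_nonneg ha₀ hx
  have h₁ : x ≤ 1 := (CFC.le_one_iff a).mp ha₁ x hx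
  nlinarith [Real.sq_sqrt h₀, Real.le_sqrt_self_iff.mpr h₁]

end CStarAlgebra

namespace Matrix

variable {n 𝕜 : Type*} [Fintype n] [RCLike 𝕜]

lemma norm_trace_mul_mul_conjTranspose_le {ρ : Matrix n n 𝕜} (hρ : ρ.PosSemidef)
    (X Y : Matrix n n 𝕜) :
    ‖(Y * ρ * Xᴴ).trace‖ ≤
      √(RCLike.re (X * ρ * Xᴴ).trace) * √(RCLike.re (Y * ρ * Yᴴ).trace) := by
  let := ρ.toMatrixSeminormedAddCommGroup hρ
  let := ρ.toMatrixInnerProductSpace hρ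
  have := norm_inner_le_norm (𝕜 := 𝕜) X Y
  rwa [norm_eq_sqrt_re_inner (𝕜 := 𝕜) X, norm_eq_sqrt_re_inner (𝕜 := 𝕜) Y] at this

variable [DecidableEq n]

lemma PosSemidef.sqrt_eq_cfcSqrt {A : Matrix n n 𝕜} (hA : A.PosSemidef) :
    hA.sqrt = CFC.sqrt A := by
  rw [CFC.sqrt_eq_real_sqrt A hA.nonneg, cfcₙ_eq_cfc, hA.1.cfc_eq]
  rfl

lemma trace_mul_nonneg {A B : Matrix n n 𝕜} (hA : 0 ≤ A) (hB : 0 ≤ B) :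
    0 ≤ (A * B).trace := by
  have hherm : (CFC.sqrt A)ᴴ = CFC.sqrt A := (CFC.sqrt_nonneg A).isSelfAdjoint
  have hcyc : (A * B).trace = (CFC.sqrt A * B * (CFC.sqrt A)ᴴ).trace := by
    rw [hherm, trace_mul_cycle, CFC.sqrt_mul_sqrt_self A]
  rw [hcyc]
  exact ((nonneg_iff_posSemidef.mp hB).mul_mul_conjTranspose_same _).trace_nonneg

lemma re_trace_mul_le_re_trace_mul {A B ρ : Matrix n n 𝕜} (hAB : A ≤ B) (hρ : 0 ≤ ρ) :
    RCLike.re (A * ρ).trace ≤ RCLike.re (B * ρ).trace := by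
  have := (RCLike.nonneg_iff.mp (trace_mul_nonneg (sub_nonneg.mpr hAB) hρ)).1
  rwa [sub_mul, trace_sub, map_sub, sub_nonneg] at this

lemma IsHermitian.exists_mem_unitary_abs_eq_mul {M : Matrix n n 𝕜} (hM : M.IsHermitian) :
    ∃ C ∈ unitary (Matrix n n 𝕜), CFC.abs M = C * M := by
  have hM' : IsSelfAdjoint M := hM
  let sign : ℝ → ℝ := fun x ↦ if 0 ≤ x then 1 else -1
  -- every function is continuous on the finite spectrum of a matrix
  have hsign : ContinuousOn sign (spectrum ℝ M) := M.finite_real_spectrum.continuousOn _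
  refine ⟨cfc sign M, ?_, ?_⟩
  · have hsa : IsSelfAdjoint (cfc sign M) := cfc_predicate sign M
    have hsq : cfc sign M * cfc sign M = 1 := by
      rw [← cfc_mul .., ← cfc_const_one ℝ M]
      refine cfc_congr fun x _ ↦ ?_
      by_cases h : 0 ≤ x <;> simp [sign, h]
    exact ⟨by rw [hsa.star_eq, hsq], by rw [hsa.star_eq, hsq]⟩
  · rw [CFC.abs_eq_cfc_norm M]
    conv_rhs => arg 2; rw [← cfc_id' ℝ M]
    rw [← cfc_mul ..]
    refine cfc_congr fun x _ ↦ ?_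
    by_cases h : 0 ≤ x
    · simp [sign, h, abs_of_nonneg h]
    · simp [sign, h, abs_of_neg (not_le.mp h)]

lemma trace_unitary_mul_mul_conjTranspose {C : Matrix n n 𝕜} (hC : C ∈ unitary (Matrix n n 𝕜))
    (X ρ : Matrix n n 𝕜) : (C * X * ρ * (C * X)ᴴ).trace = (X * ρ * Xᴴ).trace := by
  have hCC : Cᴴ * C = 1 := Unitary.star_mul_self_of_mem hC
  rw [conjTranspose_mul, trace_mul_cycle, ← mul_assoc, mul_assoc Xᴴ, hCC, mul_one]
  exact (trace_mul_cycle X ρ Xᴴ).symm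

lemma re_trace_abs_sqrt_mul_mul_sqrt_sub_le {Λ ρ : Matrix n n 𝕜} (hΛ₀ : 0 ≤ Λ) (hΛ₁ : Λ ≤ 1)
    (hρ : 0 ≤ ρ) :
    RCLike.re (CFC.abs (CFC.sqrt Λ * ρ * CFC.sqrt Λ - ρ)).trace ≤
      2 * √(RCLike.re ρ.trace) * √(RCLike.re ((1 - Λ) * ρ).trace) := by
  set s := CFC.sqrt Λ
  have hs : sᴴ = s := (CFC.sqrt_nonneg Λ).isSelfAdjoint
  have hρ' : ρ.PosSemidef := nonneg_iff_posSemidef.mp hρ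
  have hM : (s * ρ * s - ρ).IsHermitian := by
    have := (hρ'.mul_mul_conjTranspose_same s).isHermitian.sub hρ'.isHermitian
    rwa [hs] at this
  obtain ⟨C, hC, habs⟩ := hM.exists_mem_unitary_abs_eq_mul
  have hsplit : C * (s * ρ * s - ρ) = C * s * ρ * (s - 1)ᴴ + C * (s - 1) * ρ := by
    rw [conjTranspose_sub, hs, conjTranspose_one]
    noncomm_ring
  have hs_le : RCLike.re (s * ρ * sᴴ).trace ≤ RCLike.re ρ.trace := by
    rw [hs, trace_mul_cycle, CFC.sqrt_mul_sqrt_self Λ, ← one_mul ρ, ← mul_assoc, mul_one]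
    exact re_trace_mul_le_re_trace_mul hΛ₁ hρ
  have hs_sub_le :
      √(RCLike.re ((s - 1) * ρ * (s - 1)ᴴ).trace) ≤ √(RCLike.re ((1 - Λ) * ρ).trace) := by
    rw [conjTranspose_sub, hs, conjTranspose_one, trace_mul_cycle]
    refine Real.sqrt_le_sqrt (re_trace_mul_le_re_trace_mul ?_ hρ)
    calc (s - 1) * (s - 1) = (1 - s) ^ 2 := by noncomm_ring
      _ ≤ 1 - Λ := CFC.sq_one_sub_sqrt_le_one_sub hΛ₀ hΛ₁
  have h₁ := norm_trace_mul_mul_conjTranspose_le hρ' (s - 1) (C * s)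
  have h₂ := norm_trace_mul_mul_conjTranspose_le hρ' 1 (C * (s - 1))
  rw [trace_unitary_mul_mul_conjTranspose hC] at h₁ h₂
  simp only [conjTranspose_one, mul_one, one_mul] at h₂
  calc RCLike.re (CFC.abs (s * ρ * s - ρ)).trace
      ≤ ‖(C * s * ρ * (s - 1)ᴴ).trace‖ + ‖(C * (s - 1) * ρ).trace‖ := by
        rw [habs, hsplit, trace_add, map_add]
        exact add_le_add (RCLike.re_le_norm _) (RCLike.re_le_norm _)
    _ ≤ √(RCLike.re ((1 - Λ) * ρ).trace) * √(RCLike.re ρ.trace)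
        + √(RCLike.re ρ.trace) * √(RCLike.re ((1 - Λ) * ρ).trace) := by
        gcongr ?_ + ?_
        · exact h₁.trans (mul_le_mul hs_sub_le (Real.sqrt_le_sqrt hs_le) (Real.sqrt_nonneg _)
            (Real.sqrt_nonneg _))
        · exact h₂.trans (mul_le_mul_of_nonneg_left hs_sub_le (Real.sqrt_nonneg _))
    _ = 2 * √(RCLike.re ρ.trace) * √(RCLike.re ((1 - Λ) * ρ).trace) := by ring

lemma sum_mul_re_trace_mul_eq {ι : Type*} [Fintype ι] (B : Matrix n n ℂ) (p : ι → ℝ)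
    (ρ : ι → Matrix n n ℂ) :
    ∑ x, p x * (B * ρ x).trace.re = (B * ∑ x, (p x : ℂ) • ρ x).trace.re := by
  simp [Finset.mul_sum, trace_sum, Complex.re_sum]

end Matrix

lemma traceNorm_eq_re_trace_abs {d : ℕ} (A : Matrix (Fin d) (Fin d) ℂ) :
    traceNorm A = (CFC.abs A).trace.re := by
  rw [traceNorm, Matrix.PosSemidef.sqrt_eq_cfcSqrt]
  rfl

theorem gentle_operator_ensemble_general {𝒳 : Type*} [Fintype 𝒳] {d : ℕ}
    (p : 𝒳 → ℝ) (hp : ∀ x, 0 ≤ p x) (hp1 : ∑ x, p x = 1)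
    (ρ : 𝒳 → Matrix (Fin d) (Fin d) ℂ)
    (hρ : ∀ x, (ρ x).PosSemidef) (hρtr : ∀ x, (ρ x).trace = 1)
    (Λ : Matrix (Fin d) (Fin d) ℂ)
    (hΛ : Λ.PosSemidef) (hΛI : (1 - Λ).PosSemidef)
    (ε : ℝ)
    (h : 1 - ε ≤ ((Λ * ∑ x, (p x : ℂ) • ρ x).trace).re) :
    ∑ x, p x * traceNorm (hΛ.sqrt * ρ x * hΛ.sqrt - ρ x) ≤ 2 * Real.sqrt ε := by
  set δ : 𝒳 → ℝ := fun x ↦ ((1 - Λ) * ρ x).trace.re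
  have hsingle : ∀ x, traceNorm (hΛ.sqrt * ρ x * hΛ.sqrt - ρ x) ≤ 2 * √(δ x) := fun x ↦ by
    have := Matrix.re_trace_abs_sqrt_mul_mul_sqrt_sub_le hΛ.nonneg hΛI (hρ x).nonneg
    simpa [traceNorm_eq_re_trace_abs, hΛ.sqrt_eq_cfcSqrt, hρtr x] using this
  have havg : ∑ x, p x * δ x ≤ ε := by
    have hsum := Matrix.sum_mul_re_trace_mul_eq 1 p ρ
    simp only [Matrix.one_mul, hρtr, Complex.one_re, mul_one, hp1] at hsum
    rw [Matrix.sum_mul_re_trace_mul_eq, Matrix.sub_mul, Matrix.trace_sub, Complex.sub_re,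
      Matrix.one_mul, ← hsum]
    linarith
  have hδ : ∀ x, 0 ≤ δ x := fun x ↦
    (Complex.nonneg_iff.mp (Matrix.trace_mul_nonneg hΛI.nonneg (hρ x).nonneg)).1
  have hjensen : ∑ x, p x * √(δ x) ≤ √(∑ x, p x * δ x) :=
    Real.strictConcaveOn_sqrt.concaveOn.le_map_sum (fun x _ ↦ hp x) hp1 (fun x _ ↦ hδ x)
  calc ∑ x, p x * traceNorm (hΛ.sqrt * ρ x * hΛ.sqrt - ρ x)
      ≤ ∑ x, p x * (2 * √(δ x)) :=
        Finset.sum_le_sum fun x _ ↦ mul_le_mul_of_nonneg_left (hsingle x) (hp x)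
    _ = 2 * ∑ x, p x * √(δ x) := by
        rw [Finset.mul_sum]
        exact Finset.sum_congr rfl fun x _ ↦ by ring
    _ ≤ 2 * √ε := by gcongr; exact hjensen.trans (Real.sqrt_le_sqrt havg)

/-- **Gentle Operator Lemma for Ensembles**: if `{p(x), ρ_x}` is a finite ensemble of
density matrices with average state `ρ̄`, `0 ≤ Λ ≤ I`, and `Tr{Λρ̄} ≥ 1 − ε`, then
`Σ_x p(x) ‖√Λ ρ_x √Λ − ρ_x‖₁ ≤ 2√ε`. -/
theorem gentle_operator_ensemble {𝒳 : Type*} [Fintype 𝒳] {d : ℕ}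
    (p : 𝒳 → ℝ) (hp : ∀ x, 0 ≤ p x) (hp1 : ∑ x, p x = 1)
    (ρ : 𝒳 → Matrix (Fin d) (Fin d) ℂ)
    (hρ : ∀ x, (ρ x).PosSemidef) (hρtr : ∀ x, (ρ x).trace = 1)
    (Λ : Matrix (Fin d) (Fin d) ℂ)
    (hΛ : Λ.PosSemidef) (hΛI : (1 - Λ).PosSemidef)
    (ε : ℝ) (hε : 0 ≤ ε)
    (h : 1 - ε ≤ ((Λ * ∑ x, (p x : ℂ) • ρ x).trace).re) :
    ∑ x, p x * traceNorm (hΛ.sqrt * ρ x * hΛ.sqrt - ρ x) ≤ 2 * Real.sqrt ε :=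
  gentle_operator_ensemble_general p hp hp1 ρ hρ hρtr Λ hΛ hΛI ε h
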